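/- arXiv:1701.03771 — 3 statements merged into one kernel-verified Lean document; each statement's English description precedes it below -/
import Mathlib

section
/- Let χ be a real primitive Dirichlet character of conductor D ≥ 3. Then |L(1,χ)| ≪ log D, i.e. there is an absolute constant C such that |∑_{n=1}^∞ χ(n)/n| ≤ C·log D. -/
/-!
For `σ > 1` split `L(σ, χ)` at `n = D`. The terms with `n < D` contribute at most the
harmonic number `H_{D-1} ≤ 1 + log D`. The terms with `n ≥ D`, grouped by residue class `j`,
give `∑ⱼ χ(j) Uⱼ` with `Uⱼ = ∑_{m ≥ 1} (j + mD)^{-σ}`. Since `∑ⱼ χ(j) = 0`, each `Uⱼ` may be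
replaced by `Uⱼ - U₀`, and `|Uⱼ - U₀| ≤ D^{-σ}` because the terms of `Uⱼ` interlace those of
`U₀`; so this part is at most `1`. Finally let `σ → 1⁺`, using that `L(·, χ)` is continuous
at `1`.
-/

open DirichletCharacter Real Filter Topology Finset

lemma abs_tsum_sub_tsum_le_of_interlace {a b : ℕ → ℝ} (ha : Summable a) (hb : Summable b)
    (hab : ∀ m, a m ≤ b m) (hba : ∀ m, b (m + 1) ≤ a m) :
    |∑' m, a m - ∑' m, b m| ≤ b 0 := by
  have hb' : Summable fun m ↦ b (m + 1) := (summable_nat_add_iff 1).mpr hb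
  have hle : ∑' m, a m ≤ ∑' m, b m := ha.tsum_le_tsum hab hb
  have hge : ∑' m, b (m + 1) ≤ ∑' m, a m := hb'.tsum_le_tsum hba ha
  rw [hb.tsum_eq_zero_add] at hle ⊢
  rw [abs_sub_le_iff]
  constructor <;> linarith

lemma norm_sum_mul_le_of_sum_eq_zero {ι : Type*} [Fintype ι] {Φ : ι → ℂ} {U : ι → ℝ}
    {M ε : ℝ} (hsum : ∑ i, Φ i = 0) (hΦ : ∀ i, ‖Φ i‖ ≤ M) (i₀ : ι)
    (hU : ∀ i, |U i - U i₀| ≤ ε) :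
    ‖∑ i, Φ i * U i‖ ≤ Fintype.card ι * (M * ε) := by
  have hshift : ∑ i, Φ i * U i = ∑ i, Φ i * ↑(U i - U i₀) := by
    simp only [Complex.ofReal_sub, mul_sub, sum_sub_distrib, ← sum_mul, hsum, zero_mul, sub_zero]
  calc ‖∑ i, Φ i * U i‖ ≤ ∑ _i : ι, M * ε := by
        rw [hshift]
        refine (norm_sum_le _ _).trans (sum_le_sum fun i _ ↦ ?_)
        rw [norm_mul, Complex.norm_real, norm_eq_abs]
        exact mul_le_mul (hΦ i) (hU i) (abs_nonneg _) ((norm_nonneg _).trans (hΦ i))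
    _ = Fintype.card ι * (M * ε) := by simp

lemma norm_sum_range_term_le {f : ℕ → ℂ} {M : ℝ} (hf : ∀ n, ‖f n‖ ≤ M) {s : ℂ}
    (hs : 1 ≤ s.re) (N : ℕ) :
    ‖∑ n ∈ range N, LSeries.term f s n‖ ≤ M * (1 + log N) := by
  have hM : 0 ≤ M := (norm_nonneg _).trans (hf 0)
  rcases N with _ | N
  · simpa using hM
  have hterm (i : ℕ) : ‖LSeries.term f s (i + 1)‖ ≤ M * ((i : ℝ) + 1)⁻¹ := by
    refine (LSeries.norm_term_le_of_re_le_re f (s := 1) (by simpa using hs) _).trans ?_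
    rw [LSeries.norm_term_eq, if_neg (Nat.succ_ne_zero i), Complex.one_re, rpow_one,
      div_eq_mul_inv]
    push_cast
    gcongr
    exact hf _
  calc ‖∑ n ∈ range (N + 1), LSeries.term f s n‖
      ≤ ∑ i ∈ range N, ‖LSeries.term f s (i + 1)‖ := by
        simpa [sum_range_succ'] using norm_sum_le (range N) fun i ↦ LSeries.term f s (i + 1)
    _ ≤ M * harmonic N := by
        simp only [harmonic, Rat.cast_sum, mul_sum]
        exact sum_le_sum fun i _ ↦ by simpa using hterm i
    _ ≤ M * (1 + log N) := by gcongr; exact harmonic_le_one_add_log N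
    _ ≤ M * (1 + log ↑(N + 1)) := by
        have : log N ≤ log ↑(N + 1) := by
          rcases N.eq_zero_or_pos with rfl | hN
          · simp
          · exact log_le_log (Nat.cast_pos.mpr hN) (by push_cast; linarith)
        gcongr

noncomputable def residueTail (D : ℕ) (σ : ℝ) (j : ℕ) : ℝ :=
  ∑' m : ℕ, ((j + D * (m + 1) : ℕ) : ℝ) ^ (-σ)

section residueTail

variable {D : ℕ} {σ : ℝ}

lemma summable_residueTail (hD : 0 < D) (hσ : 1 < σ) (j : ℕ) :
    Summable fun m : ℕ ↦ ((j + D * (m + 1) : ℕ) : ℝ) ^ (-σ) := by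
  refine (summable_nat_rpow.mpr (by linarith)).comp_injective (i := fun m ↦ j + D * (m + 1)) ?_
  intro m m' h
  simpa [hD.ne'] using h

lemma abs_residueTail_sub_residueTail_zero_le {j : ℕ} (hj : j < D) (hσ : 1 < σ) :
    |residueTail D σ j - residueTail D σ 0| ≤ (D : ℝ) ^ (-σ) := by
  have hD : 0 < D := by omega
  have hmono {k l : ℕ} (hk : 0 < k) (hkl : k ≤ l) : (l : ℝ) ^ (-σ) ≤ (k : ℝ) ^ (-σ) :=
    rpow_le_rpow_of_nonpos (by exact_mod_cast hk) (by exact_mod_cast hkl) (by linarith)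
  simpa [residueTail] using abs_tsum_sub_tsum_le_of_interlace (summable_residueTail hD hσ j)
    (summable_residueTail hD hσ 0) (fun m ↦ hmono (by positivity) (by omega))
    (fun m ↦ hmono (by positivity) (by nlinarith))

end residueTail

namespace ZMod

variable {D : ℕ} [NeZero D] {σ : ℝ}

lemma tsum_term_add_eq_sum_mul_residueTail (Φ : ZMod D → ℂ) (hσ : 1 < σ) :
    ∑' n, LSeries.term (Φ ·) σ (n + D) = ∑ j : ZMod D, Φ j * residueTail D σ j.val := by
  have hsum : Summable fun n ↦ LSeries.term (Φ ·) σ (n + D) :=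
    (summable_nat_add_iff D).mpr (LSeriesSummable_of_one_lt_re Φ (by simpa using hσ))
  rw [Nat.sumByResidueClasses hsum D]
  refine sum_congr rfl fun j _ ↦ ?_
  rw [residueTail, Complex.ofReal_tsum, ← tsum_mul_left]
  refine tsum_congr fun m ↦ ?_
  have hidx : j.val + D * m + D = j.val + D * (m + 1) := by ring
  have hcast : ((j.val + D * (m + 1) : ℕ) : ZMod D) = j := by simp
  have hpos : 0 < j.val + D * (m + 1) := by have := NeZero.pos D; positivity
  rw [hidx, LSeries.term_of_ne_zero hpos.ne', hcast, div_eq_mul_inv,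
    Complex.ofReal_cpow (by positivity), Complex.ofReal_neg, Complex.cpow_neg]
  norm_cast

lemma norm_LSeries_le_of_sum_eq_zero {Φ : ZMod D → ℂ} {M : ℝ} (hΦ : ∀ j, ‖Φ j‖ ≤ M)
    (hsum : ∑ j, Φ j = 0) (hσ : 1 < σ) :
    ‖LSeries (Φ ·) σ‖ ≤ M * (2 + log D) := by
  have hM : 0 ≤ M := (norm_nonneg _).trans (hΦ 0)
  have hD : (1 : ℝ) ≤ D := by exact_mod_cast NeZero.one_le
  have hhead := norm_sum_range_term_le (f := (Φ ·)) (fun n ↦ hΦ n) (s := σ)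
    (by simpa using hσ.le) D
  have htail : ‖∑ j : ZMod D, Φ j * residueTail D σ j.val‖ ≤ M := by
    have hU (j : ZMod D) := abs_residueTail_sub_residueTail_zero_le (ZMod.val_lt j) hσ
    have hpow : (D : ℝ) ^ (-σ) ≤ (D : ℝ)⁻¹ := by
      rw [← rpow_neg_one]
      exact rpow_le_rpow_of_exponent_le hD (by linarith)
    calc _ ≤ D * (M * (D : ℝ) ^ (-σ)) := by
          simpa using norm_sum_mul_le_of_sum_eq_zero hsum hΦ 0 (by simpa using hU)
      _ ≤ D * (M * (D : ℝ)⁻¹) := by gcongr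
      _ = M := by field_simp
  rw [LSeries, ← (LSeriesSummable_of_one_lt_re Φ (by simpa using hσ)).sum_add_tsum_nat_add D,
    tsum_term_add_eq_sum_mul_residueTail Φ hσ]
  calc _ ≤ M * (1 + log D) + M := (norm_add_le _ _).trans (add_le_add hhead htail)
    _ = M * (2 + log D) := by ring

lemma norm_LFunction_one_le_of_sum_eq_zero {Φ : ZMod D → ℂ} {M : ℝ}
    (hΦ : ∀ j, ‖Φ j‖ ≤ M) (hsum : ∑ j, Φ j = 0) :
    ‖LFunction Φ 1‖ ≤ M * (2 + log D) := by
  have hcont : Tendsto (fun σ : ℝ ↦ LFunction Φ σ) (𝓝[>] 1) (𝓝 (LFunction Φ 1)) := by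
    refine ((differentiableAt_LFunction Φ 1 (.inr hsum)).continuousAt.tendsto).comp ?_
    simpa using (Complex.continuous_ofReal.tendsto 1).mono_left nhdsWithin_le_nhds
  refine le_of_tendsto hcont.norm ?_
  filter_upwards [self_mem_nhdsWithin] with σ (hσ : 1 < σ)
  rw [LFunction_eq_LSeries Φ (by simpa using hσ)]
  exact norm_LSeries_le_of_sum_eq_zero hΦ hsum hσ

end ZMod

/-- For a real primitive Dirichlet character `χ` of conductor `D ≥ 3`,
`|L(1,χ)| ≪ log D` with an absolute implied constant. -/
theorem lfunction_one_le_log :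
    ∃ C : ℝ, 0 < C ∧ ∀ (D : ℕ) [NeZero D], 3 ≤ D →
      ∀ χ : DirichletCharacter ℂ D, χ.IsPrimitive → (∀ n : ℕ, (χ n).im = 0) →
        ‖LFunction χ 1‖ ≤ C * Real.log D := by
  refine ⟨3, by norm_num, fun D _ hD χ hprim _ ↦ ?_⟩
  have hχ : χ ≠ 1 := by
    rintro rfl
    rw [isPrimitive_def, conductor_one] at hprim
    omega
  have hlog : 1 ≤ log D := by
    rw [le_log_iff_exp_le (by positivity)]
    have : (3 : ℝ) ≤ D := by exact_mod_cast hD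
    linarith [exp_one_lt_d9]
  calc ‖LFunction χ 1‖ ≤ 1 * (2 + log D) :=
        ZMod.norm_LFunction_one_le_of_sum_eq_zero χ.norm_le_one (MulChar.sum_eq_zero_of_ne_one hχ)
    _ ≤ 3 * log D := by linarith
end

section
/- Let L(1,χ), β, η, D satisfy: L(1,χ) ≍ (1−β)·S(D), S(D) ≪ (log η)^{−1}(log D)², and η = 1/((1−β) log D). If moreover 1 − β ≤ c(log D)^{−3} log log D, then η ≫ log D and consequently L(1,χ) ≪ (log D)^{−1}. -/
open Real

set_option maxHeartbeats 1000000 in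
/-- Deduction of Theorem 2 from (2.2) and (3.7): if `L(1,χ) ≍ (1-β) S(D)`,
`S(D) ≪ (log η)⁻¹ (log D)²` with `η = 1/((1-β) log D) ≥ 3`, and
`1 - β ≤ c (log D)⁻³ log log D`, then `η ≫ log D` and `L(1,χ) ≪ (log D)⁻¹`. -/
theorem theorem2_deduction (c c₁ c₂ c₃ : ℝ) (hc : 0 < c) (hc₁ : 0 < c₁) (hc₂ : 0 < c₂)
    (hc₃ : 0 < c₃) :
    ∃ K C : ℝ, 0 < K ∧ 0 < C ∧
      ∀ D β η L₁ SD : ℝ, 16 ≤ D → 0 < β → β < 1 → 0 < SD →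
        η = 1 / ((1 - β) * Real.log D) → 3 ≤ η →
        c₁ * ((1 - β) * SD) ≤ L₁ → L₁ ≤ c₂ * ((1 - β) * SD) →
        SD ≤ c₃ * (Real.log η)⁻¹ * (Real.log D) ^ 2 →
        1 - β ≤ c * (Real.log D) ^ (-3 : ℤ) * Real.log (Real.log D) →
        K * Real.log D ≤ η ∧ L₁ ≤ C * (Real.log D)⁻¹ := by
  have hmax1 : (1:ℝ) ≤ max (Real.log c) 1 := le_max_right _ _
  have hCpos : 0 < c₂ * c₃ * c * (2 * max (Real.log c) 1) :=
    mul_pos (mul_pos (mul_pos hc₂ hc₃) hc) (by linarith)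
  refine ⟨c⁻¹, c₂ * c₃ * c * (2 * max (Real.log c) 1), by positivity, hCpos, ?_⟩
  intro D β η L₁ SD hD hβ0 hβ1 hSD hη hη3 hL1 hL2 hSDle hβle
  have hexp1 : Real.exp 1 < 2.7182818286 := Real.exp_one_lt_d9
  have hlogD : 1 < Real.log D := by
    have h16 : (1:ℝ) < Real.log 16 := by
      rw [Real.lt_log_iff_exp_lt (by norm_num)]; linarith
    have : Real.log 16 ≤ Real.log D := Real.log_le_log (by norm_num) hD
    linarith
  have h1β : 0 < 1 - β := by linarith
  have hlD0 : 0 < Real.log D := by linarith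
  have hllD : 0 < Real.log (Real.log D) := Real.log_pos hlogD
  have hX : 0 < (1 - β) * Real.log D := by positivity
  have hηpos : 0 < η := by rw [hη]; positivity
  have hlogη : 1 ≤ Real.log η := by
    have h3 : (1:ℝ) < Real.log 3 := by
      rw [Real.lt_log_iff_exp_lt (by norm_num)]; linarith
    have : Real.log 3 ≤ Real.log η := Real.log_le_log (by norm_num) hη3
    linarith
  have hlogηpos : 0 < Real.log η := by linarith
  have hzp : (Real.log D) ^ (-3 : ℤ) = ((Real.log D) ^ 3)⁻¹ := by
    rw [zpow_neg, zpow_ofNat]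
  -- Step A : η ≥ log D / c
  have hXle : (1 - β) * Real.log D ≤ c / Real.log D := by
    have h1 : Real.log (Real.log D) ≤ Real.log D := Real.log_le_self hlD0.le
    calc (1 - β) * Real.log D
        ≤ (c * ((Real.log D) ^ 3)⁻¹ * Real.log (Real.log D)) * Real.log D := by
          rw [← hzp]; gcongr
      _ ≤ (c * ((Real.log D) ^ 3)⁻¹ * Real.log D) * Real.log D := by gcongr
      _ = c / Real.log D := by field_simp
  have hKη : c⁻¹ * Real.log D ≤ η := by
    rw [hη]
    have h := one_div_le_one_div_of_le hX hXle
    calc c⁻¹ * Real.log D = 1 / (c / Real.log D) := by field_simp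
      _ ≤ _ := h
  refine ⟨hKη, ?_⟩
  -- log log D ≤ 2 max(log c, 1) * log η
  have hMη : Real.log (Real.log D) ≤ (2 * max (Real.log c) 1) * Real.log η := by
    rcases le_or_gt (c ^ 2) (Real.log D) with hcase | hcase
    · have hcs : c ≤ Real.sqrt (Real.log D) := by
        rw [show c = Real.sqrt (c ^ 2) from (Real.sqrt_sq hc.le).symm]
        exact Real.sqrt_le_sqrt hcase
      have hsqpos : 0 < Real.sqrt (Real.log D) := Real.sqrt_pos.2 hlD0
      have hsq : Real.sqrt (Real.log D) ≤ η := by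
        have h1 : Real.sqrt (Real.log D) ≤ Real.log D / c := by
          rw [le_div_iff₀ hc]
          calc Real.sqrt (Real.log D) * c
              ≤ Real.sqrt (Real.log D) * Real.sqrt (Real.log D) := by gcongr
            _ = Real.log D := Real.mul_self_sqrt hlD0.le
        have h2 : Real.log D / c = c⁻¹ * Real.log D := by ring
        linarith [hKη, h1, h2 ▸ h1]
      have h3 : Real.log (Real.sqrt (Real.log D)) ≤ Real.log η :=
        Real.log_le_log hsqpos hsq
      rw [Real.log_sqrt hlD0.le] at h3
      nlinarith
    · have h1 : Real.log (Real.log D) ≤ Real.log (c ^ 2) :=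
        Real.log_le_log hlD0 hcase.le
      rw [Real.log_pow] at h1
      have h2 : Real.log c ≤ max (Real.log c) 1 := le_max_left _ _
      have : Real.log (Real.log D) ≤ 2 * max (Real.log c) 1 := by push_cast at h1; nlinarith
      nlinarith
  -- Final bound
  have key : L₁ ≤ c₂ * ((c * ((Real.log D) ^ 3)⁻¹ * ((2 * max (Real.log c) 1) * Real.log η)) *
      (c₃ * (Real.log η)⁻¹ * (Real.log D) ^ 2)) := by
    calc L₁ ≤ c₂ * ((1 - β) * SD) := hL2
      _ ≤ c₂ * ((1 - β) * (c₃ * (Real.log η)⁻¹ * (Real.log D) ^ 2)) := by gcongr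
      _ ≤ c₂ * ((c * ((Real.log D) ^ 3)⁻¹ * Real.log (Real.log D)) *
            (c₃ * (Real.log η)⁻¹ * (Real.log D) ^ 2)) := by
          rw [← hzp]; gcongr
      _ ≤ c₂ * ((c * ((Real.log D) ^ 3)⁻¹ * ((2 * max (Real.log c) 1) * Real.log η)) *
            (c₃ * (Real.log η)⁻¹ * (Real.log D) ^ 2)) := by
          refine mul_le_mul_of_nonneg_left (mul_le_mul_of_nonneg_right
            (mul_le_mul_of_nonneg_left hMη ?_) ?_) hc₂.le <;> positivity
  have e1 : ((Real.log D) ^ 3)⁻¹ * (Real.log D) ^ 2 = (Real.log D)⁻¹ := by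
    rw [pow_succ, mul_inv, mul_comm ((Real.log D) ^ 2)⁻¹, mul_assoc,
      inv_mul_cancel₀ (pow_ne_zero 2 hlD0.ne'), mul_one]
  calc L₁ ≤ _ := key
    _ = c₂ * c₃ * c * (2 * max (Real.log c) 1) *
          (((Real.log D) ^ 3)⁻¹ * (Real.log D) ^ 2) * (Real.log η * (Real.log η)⁻¹) := by
        ring
    _ = c₂ * c₃ * c * (2 * max (Real.log c) 1) * (Real.log D)⁻¹ := by
        rw [e1, mul_inv_cancel₀ hlogηpos.ne', mul_one]
end

section
/- Let χ be a real character mod D with χ(p) = 1 for every prime p < c·log D (c > 0 fixed), and λ = 1∗χ. Then ∑_{n≤D} λ(n)/n ≫ (log log D)², with implied constant depending only on c. -/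
/-!
Write `λ = 1 ∗ χ`. Since `|χ| ≤ 1`, each local factor `∑_{i ≤ k} χ(p)^i` of the multiplicative
function `λ` is a geometric sum with ratio `≥ -1`, so `λ ≥ 0`. If every prime `p ≤ N` has
`χ(p) = 1` and `N² ≤ D`, then each `n = ab` with `a, b ≤ N` has `λ(n) = τ(n)`, which is at least
the number of such factorisations of `n`; summing over `n ≤ D` gives
`(∑_{a ≤ N} 1/a)² ≤ ∑_{n ≤ D} λ(n)/n`. Taking `N = ⌊√(log D)⌋`, which lies below `c log D` once
`log D > c⁻²`, the harmonic sum is at least `½ log log D`. For the remaining bounded range of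
`log D` the term `n = 1` alone suffices.
-/

open Real Finset

lemma geom_sum_nonneg_of_neg_one_le {R : Type*} [Ring R] [LinearOrder R] [IsStrictOrderedRing R]
    {x : R} (hx : -1 ≤ x) (n : ℕ) : 0 ≤ ∑ i ∈ range n, x ^ i := by
  rcases eq_or_ne n 0 with rfl | hn
  · simp
  rcases hx.eq_or_lt with rfl | hx
  · rw [neg_one_geom_sum]
    split_ifs <;> norm_num
  · exact (geom_sum_pos' (neg_lt_iff_pos_add.mp hx) hn).le

lemma log_div_two_le_sum_inv_Icc_floor_sqrt {x : ℝ} (hx : 0 < x) :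
    log x / 2 ≤ ∑ a ∈ Icc 1 ⌊√x⌋₊, (a : ℝ)⁻¹ :=
  calc log x / 2 = log √x := (log_sqrt hx.le).symm
    _ ≤ log ((⌊√x⌋₊ + 1 : ℕ) : ℝ) := by
        refine log_le_log (sqrt_pos.mpr hx) ?_
        exact_mod_cast (Nat.lt_floor_add_one √x).le
    _ ≤ ∑ a ∈ Icc 1 ⌊√x⌋₊, (a : ℝ)⁻¹ := by
        simpa [harmonic_eq_sum_Icc] using log_add_one_le_harmonic ⌊√x⌋₊

namespace DirichletCharacter

variable {D : ℕ}

lemma apply_natCast_eq_one_of_forall_prime_dvd {R : Type*} [CommMonoidWithZero R]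
    (χ : DirichletCharacter R D) {d : ℕ} (hd : d ≠ 0) (h : ∀ p : ℕ, p.Prime → p ∣ d → χ p = 1) :
    χ d = 1 := by
  rw [← Nat.prod_primeFactorsList hd, Nat.cast_list_prod, map_list_prod, List.map_map]
  refine List.prod_eq_one fun x hx ↦ ?_
  obtain ⟨p, hp, rfl⟩ := List.mem_map.mp hx
  exact h p (Nat.prime_of_mem_primeFactorsList hp) (Nat.dvd_of_mem_primeFactorsList hp)

variable (χ : DirichletCharacter ℝ D)

lemma neg_one_le_apply (a : ZMod D) : -1 ≤ χ a :=
  (abs_le.mp (χ.norm_le_one a)).1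

lemma sum_divisors_nonneg (n : ℕ) : 0 ≤ ∑ d ∈ n.divisors, χ d := by
  set f : ArithmeticFunction ℝ := ArithmeticFunction.zeta * toArithmeticFunction (χ ·)
  have hf : ∀ m, f m = ∑ d ∈ m.divisors, χ d := fun m ↦ by
    rw [ArithmeticFunction.coe_zeta_mul_apply]
    exact sum_congr rfl fun d hd ↦
      (χ.apply_eq_toArithmeticFunction_apply (Nat.pos_of_mem_divisors hd).ne').symm
  have hf_mul : f.IsMultiplicative :=
    ArithmeticFunction.isMultiplicative_zeta.natCast.mul χ.isMultiplicative_toArithmeticFunction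
  rcases eq_or_ne n 0 with rfl | hn
  · simp
  rw [← hf, hf_mul.multiplicative_factorization f hn]
  refine prod_nonneg fun p hp ↦ ?_
  dsimp only
  rw [hf, Nat.sum_divisors_prime_pow (Nat.prime_of_mem_primeFactors hp)]
  simp only [Nat.cast_pow, map_pow]
  exact geom_sum_nonneg_of_neg_one_le (χ.neg_one_le_apply p) _

lemma sum_divisors_eq_card {n : ℕ} (h : ∀ p : ℕ, p.Prime → p ∣ n → χ p = 1) :
    ∑ d ∈ n.divisors, χ d = #n.divisors := by
  rw [sum_congr rfl fun d hd ↦ χ.apply_natCast_eq_one_of_forall_prime_dvd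
      (Nat.pos_of_mem_divisors hd).ne'
      fun p hp hpd ↦ h p hp (hpd.trans (Nat.dvd_of_mem_divisors hd)),
    sum_const, nsmul_one]

lemma card_mul_eq_le_sum_divisors {N : ℕ} (hχ : ∀ p : ℕ, p.Prime → p ≤ N → χ p = 1) {n : ℕ}
    (hn : n ≠ 0) : (#{q ∈ Icc 1 N ×ˢ Icc 1 N | q.1 * q.2 = n} : ℝ) ≤ ∑ d ∈ n.divisors, χ d := by
  rcases eq_empty_or_nonempty {q ∈ Icc 1 N ×ˢ Icc 1 N | q.1 * q.2 = n} with h | ⟨⟨a, b⟩, hab⟩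
  · rw [h, card_empty, Nat.cast_zero]
    exact χ.sum_divisors_nonneg n
  simp only [mem_filter, mem_product, mem_Icc] at hab
  obtain ⟨⟨⟨ha, haN⟩, hb, hbN⟩, rfl⟩ := hab
  have hprime : ∀ p : ℕ, p.Prime → p ∣ a * b → χ p = 1 := fun p hp hpd ↦ by
    refine hχ p hp ?_
    rcases hp.dvd_mul.mp hpd with h | h
    · exact (Nat.le_of_dvd ha h).trans haN
    · exact (Nat.le_of_dvd hb h).trans hbN
  have hfiber : {q ∈ Icc 1 N ×ˢ Icc 1 N | q.1 * q.2 = a * b} ⊆ (a * b).divisorsAntidiagonal :=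
    fun q hq ↦ Nat.mem_divisorsAntidiagonal.mpr ⟨(mem_filter.mp hq).2, hn⟩
  rw [χ.sum_divisors_eq_card hprime,
    ← card_map ⟨fun d ↦ (d, a * b / d), fun _ _ ↦ congr_arg Prod.fst⟩, Nat.map_div_right_divisors]
  exact_mod_cast card_le_card hfiber

lemma sq_sum_inv_le_sum_divisors_div {N X : ℕ} (hNX : N * N ≤ X)
    (hχ : ∀ p : ℕ, p.Prime → p ≤ N → χ p = 1) :
    (∑ a ∈ Icc 1 N, (a : ℝ)⁻¹) ^ 2 ≤ ∑ n ∈ Icc 1 X, (∑ d ∈ n.divisors, χ d) / n := by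
  have hmaps : ∀ q ∈ Icc 1 N ×ˢ Icc 1 N, q.1 * q.2 ∈ Icc 1 X := fun q hq ↦ by
    simp only [mem_product, mem_Icc] at hq ⊢
    exact ⟨Nat.mul_pos hq.1.1 hq.2.1, (Nat.mul_le_mul hq.1.2 hq.2.2).trans hNX⟩
  calc (∑ a ∈ Icc 1 N, (a : ℝ)⁻¹) ^ 2
      = ∑ q ∈ Icc 1 N ×ˢ Icc 1 N, (((q.1 * q.2 : ℕ) : ℝ))⁻¹ := by
        rw [sq, sum_mul_sum, ← sum_product']
        simp only [Nat.cast_mul, mul_inv]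
    _ = ∑ n ∈ Icc 1 X, ∑ q ∈ Icc 1 N ×ˢ Icc 1 N with q.1 * q.2 = n,
          (((q.1 * q.2 : ℕ) : ℝ))⁻¹ :=
        (sum_fiberwise_of_maps_to hmaps _).symm
    _ = ∑ n ∈ Icc 1 X, (#{q ∈ Icc 1 N ×ˢ Icc 1 N | q.1 * q.2 = n} : ℝ) / n := by
        refine sum_congr rfl fun n _ ↦ ?_
        rw [sum_congr rfl fun q hq ↦ by rw [(mem_filter.mp hq).2], sum_const, nsmul_eq_mul,
          div_eq_mul_inv]
    _ ≤ ∑ n ∈ Icc 1 X, (∑ d ∈ n.divisors, χ d) / n := by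
        refine sum_le_sum fun n hn ↦ div_le_div_of_nonneg_right ?_ (Nat.cast_nonneg n)
        exact χ.card_mul_eq_le_sum_divisors hχ (by grind)

lemma sq_log_log_div_two_le_sum_divisors_div {c : ℝ} (hD : 1 ≤ log D) (hcD : 1 < c * √(log D))
    (hχ : ∀ p : ℕ, p.Prime → (p : ℝ) < c * log D → χ p = 1) :
    (log (log D) / 2) ^ 2 ≤ ∑ n ∈ Icc 1 D, (∑ d ∈ n.divisors, χ d) / n := by
  set N := ⌊√(log D)⌋₊
  have hN : (N : ℝ) ≤ √(log D) := Nat.floor_le (sqrt_nonneg _)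
  have hND : N * N ≤ D := by
    have : (N : ℝ) * N ≤ D :=
      calc (N : ℝ) * N ≤ √(log D) * √(log D) := mul_self_le_mul_self N.cast_nonneg hN
        _ = log D := mul_self_sqrt (by linarith)
        _ ≤ D := log_le_self D.cast_nonneg
    exact_mod_cast this
  have hχN : ∀ p : ℕ, p.Prime → p ≤ N → χ p = 1 := fun p hp hpN ↦ by
    refine hχ p hp ?_
    have hsqrt : 0 < √(log D) := sqrt_pos.mpr (by linarith)
    calc (p : ℝ) ≤ √(log D) := (Nat.cast_le.mpr hpN).trans hN
      _ < c * √(log D) * √(log D) := lt_mul_left hsqrt hcD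
      _ = c * log D := by rw [mul_assoc, mul_self_sqrt (by linarith)]
  calc (log (log D) / 2) ^ 2 ≤ (∑ a ∈ Icc 1 N, (a : ℝ)⁻¹) ^ 2 := by
        gcongr
        · exact div_nonneg (log_nonneg hD) zero_le_two
        · exact log_div_two_le_sum_inv_Icc_floor_sqrt (by linarith)
    _ ≤ _ := χ.sq_sum_inv_le_sum_divisors_div hND hχN

end DirichletCharacter

/-- If `χ` is a real character mod `D` with `χ(p) = 1` for every prime `p < c log D`,
and `λ = 1 ∗ χ`, then `∑_{n ≤ D} λ(n)/n ≫ (log log D)²`, the implied constant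
depending only on `c`. -/
theorem sum_lambda_large (c : ℝ) (hc : 0 < c) :
    ∃ k : ℝ, 0 < k ∧ ∀ (D : ℕ) [NeZero D], 16 ≤ D →
      ∀ χ : DirichletCharacter ℝ D,
        (∀ p : ℕ, p.Prime → (p : ℝ) < c * Real.log D → χ p = 1) →
        k * (Real.log (Real.log D)) ^ 2
          ≤ ∑ n ∈ Finset.Icc 1 D, (∑ d ∈ n.divisors, χ d) / (n : ℝ) := by
  set M := max (c⁻¹ ^ 2) 2
  have hM : 0 < log M := log_pos (by linarith [le_max_right (c⁻¹ ^ 2) 2])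
  refine ⟨min (1 / 4) ((log M ^ 2)⁻¹), by positivity, fun D _ hD χ hχ ↦ ?_⟩
  have hL : 1 ≤ log D := by
    have : (16 : ℝ) ≤ D := by exact_mod_cast hD
    rw [le_log_iff_exp_le (by linarith)]
    linarith [exp_one_lt_d9]
  have hlogL : 0 ≤ log (log D) := log_nonneg hL
  by_cases hcD : 1 < c * √(log D)
  · calc min (1 / 4) ((log M ^ 2)⁻¹) * log (log D) ^ 2 ≤ 1 / 4 * log (log D) ^ 2 := by
          gcongr; exact min_le_left _ _
      _ = (log (log D) / 2) ^ 2 := by ring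
      _ ≤ _ := χ.sq_log_log_div_two_le_sum_divisors_div hL hcD hχ
  · have hLM : log D ≤ M := by
      have hsqrt : √(log D) ≤ c⁻¹ := by
        rw [← one_div, le_div_iff₀ hc]; linarith
      calc log D = √(log D) ^ 2 := (sq_sqrt (by linarith)).symm
        _ ≤ c⁻¹ ^ 2 := by gcongr
        _ ≤ M := le_max_left _ _
    calc min (1 / 4) ((log M ^ 2)⁻¹) * log (log D) ^ 2 ≤ (log M ^ 2)⁻¹ * log M ^ 2 := by
          gcongr
          exact min_le_right _ _
      _ = (∑ a ∈ Icc 1 (1 : ℕ), (a : ℝ)⁻¹) ^ 2 := by simp [hM.ne']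
      _ ≤ _ := χ.sq_sum_inv_le_sum_divisors_div (by omega)
          fun p hp hp1 ↦ absurd hp.one_lt (by omega)
end
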